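/- There is no egalitarian dumping paradox when non-connected pieces are allowed: if y is an envy-free partial allocation of [0,1] (pieces may be arbitrary measurable sets), then there exists an envy-free complete allocation z with min_i v_i(z_i) ≥ min_i v_i(y_i). -/
import Mathlib


open MeasureTheory Set
open scoped ENNReal

/-- No dumping paradox with non-connected pieces. -/
theorem no_dumping_paradox_nonconnected (n : ℕ) (v : Fin n → Measure ℝ)
    (hprob : ∀ i, v i (Set.Icc (0:ℝ) 1) = 1)
    (hna : ∀ i, ∀ x : ℝ, v i {x} = 0)
    -- any measurable subset of the cake admits a complete envy-free division
    (hEFdiv : ∀ S : Set ℝ, MeasurableSet S → S ⊆ Set.Icc (0:ℝ) 1 →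
      ∃ B : Fin n → Set ℝ, (∀ i, MeasurableSet (B i)) ∧ (∀ i, B i ⊆ S) ∧
        (Pairwise fun i j => Disjoint (B i) (B j)) ∧
        (∀ i j, v i (B j) ≤ v i (B i)) ∧
        (∀ i, v i (⋃ j, B j) = v i S))
    -- y is an envy-free (possibly partial) allocation
    (y : Fin n → Set ℝ)
    (hym : ∀ i, MeasurableSet (y i)) (hys : ∀ i, y i ⊆ Set.Icc (0:ℝ) 1)
    (hyd : Pairwise fun i j => Disjoint (y i) (y j))
    (hyEF : ∀ i j, v i (y j) ≤ v i (y i)) :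
    -- there is an envy-free complete allocation z at least as good
    ∃ z : Fin n → Set ℝ, (∀ i, MeasurableSet (z i)) ∧ (∀ i, z i ⊆ Set.Icc (0:ℝ) 1) ∧
      (Pairwise fun i j => Disjoint (z i) (z j)) ∧
      (∀ i j, v i (z j) ≤ v i (z i)) ∧
      (∀ i, v i (⋃ j, z j) = v i (Set.Icc (0:ℝ) 1)) ∧
      (⨅ i, v i (y i) ≤ ⨅ i, v i (z i)) := by
  set S : Set ℝ := Set.Icc (0:ℝ) 1 \ ⋃ j, y j with hS
  have hSm : MeasurableSet S := (measurableSet_Icc).diff (MeasurableSet.iUnion hym)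
  have hSsub : S ⊆ Set.Icc (0:ℝ) 1 := diff_subset
  obtain ⟨B, hBm, hBsub, hBd, hBEF, hBfull⟩ := hEFdiv S hSm hSsub
  have hyB : ∀ i j, Disjoint (y i) (B j) := by
    intro i j
    exact (disjoint_sdiff_right.mono_left (subset_iUnion y i)).mono_right (hBsub j)
  refine ⟨fun i => y i ∪ B i, fun i => (hym i).union (hBm i),
    fun i => union_subset (hys i) ((hBsub i).trans hSsub), ?_, ?_, ?_, ?_⟩
  · intro i j hij
    exact ((hyd hij).union_right (hyB i j)).union_left ((hyB j i).symm.union_right (hBd hij))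
  · intro i j
    rw [measure_union (hyB j j) (hBm j), measure_union (hyB i i) (hBm i)]
    exact add_le_add (hyEF i j) (hBEF i j)
  · intro i
    have hU : (⋃ j, y j ∪ B j) = (⋃ j, y j) ∪ ⋃ j, B j := by
      rw [iUnion_union_distrib]
    have hd : Disjoint (⋃ j, y j) (⋃ j, B j) := by
      rw [disjoint_iUnion_left, ]
      intro a
      rw [disjoint_iUnion_right]
      intro b
      exact hyB a b
    have hd2 : Disjoint (⋃ j, y j) S := disjoint_sdiff_right
    rw [hU, measure_union hd (MeasurableSet.iUnion hBm), hBfull i,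
      ← measure_union hd2 hSm]
    congr 1
    rw [union_diff_cancel (iUnion_subset hys)]
  · refine le_iInf fun i => (iInf_le _ i).trans ?_
    rw [measure_union (hyB i i) (hBm i)]
    exact le_self_add
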